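/- arXiv:2406.03570 — 2 statements merged into one kernel-verified Lean document; each statement's English description precedes it below -/
import Mathlib

section
/- For every even integer n ≥ 2, with the even-case weights, and for every integer j with 1 ≤ j < (s_n − 1)/2, the sum over i = 0, ..., n of the fractional parts {j·a_i/a_{n+1}} is at least 1 + 3j/a_{n+1}. -/
/-- The Sylvester sequence: `s 0 = 2` and `s (k+1) = s 0 * s 1 * ⋯ * s k + 1`,
equivalently `s (k+1) = s k * (s k - 1) + 1`. -/
def sylvester : ℕ → ℕ
  | 0 => 2
  | n + 1 => sylvester n * (sylvester n - 1) + 1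

lemma sylvester_two_le (k : ℕ) : 2 ≤ sylvester k := by
  induction k with
  | zero => simp [sylvester]
  | succ m ih =>
    show 2 ≤ sylvester m * (sylvester m - 1) + 1
    have h1 : 1 ≤ sylvester m - 1 := by omega
    have := Nat.mul_le_mul (le_refl (sylvester m)) h1
    omega

lemma sylvester_seven_le {n : ℕ} (hn : 2 ≤ n) : 7 ≤ sylvester n := by
  induction n, hn using Nat.le_induction with
  | base => norm_num [sylvester]
  | succ m hm ih =>
    show 7 ≤ sylvester m * (sylvester m - 1) + 1
    have h1 : 6 ≤ sylvester m - 1 := by omega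
    have := Nat.mul_le_mul ih h1
    omega

lemma sylvester_sum_inv (n : ℕ) :
    ∑ i ∈ Finset.range n, (1 : ℚ) / (sylvester i : ℚ) = 1 - 1 / ((sylvester n : ℚ) - 1) := by
  induction n with
  | zero => norm_num [sylvester]
  | succ m ih =>
    have h2 : (2:ℚ) ≤ (sylvester m : ℚ) := by exact_mod_cast sylvester_two_le m
    have hm : (sylvester m : ℚ) ≠ 0 := by linarith
    have hm1 : (sylvester m : ℚ) - 1 ≠ 0 := by intro h; nlinarith [h]
    have hs : (sylvester (m+1) : ℚ) = (sylvester m : ℚ) * ((sylvester m : ℚ) - 1) + 1 := by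
      have h : sylvester (m+1) = sylvester m * (sylvester m - 1) + 1 := rfl
      have h1 : 1 ≤ sylvester m := by have := sylvester_two_le m; omega
      rw [h]; push_cast [Nat.cast_sub h1]; ring
    rw [Finset.sum_range_succ, ih, hs]
    have hms : (sylvester m : ℚ) * ((sylvester m : ℚ) - 1) ≠ 0 := mul_ne_zero hm hm1
    field_simp
    ring

/-- Abstract computation of a single fractional part `{j aᵢ / A}` for `i < n`. -/
lemma frac_term_eq (ai P A ri jq sq : ℚ) (qi : ℤ) (hP : 0 < P) (hA : 0 < A)
    (hadq : ai * P = (sq+1)*A + 2) (hqrq : P*(qi:ℚ) + ri = jq*(sq+1))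
    (hr0 : 0 ≤ ri) (hr1 : ri ≤ P - 1) (hj : 1 ≤ jq) (h2jA : 2*jq < A) :
    Int.fract (jq * ai / A) = ri/P + (2*jq/A)*(1/P) := by
  have hPne : P ≠ 0 := ne_of_gt hP
  have hAne : A ≠ 0 := ne_of_gt hA
  have hx : jq * ai / A = (qi:ℚ) + (ri*A + 2*jq)/(P*A) := by
    field_simp
    linear_combination jq*hadq - A*hqrq
  have h0 : (0:ℚ) ≤ (ri*A + 2*jq)/(P*A) := by
    apply div_nonneg
    · nlinarith
    · positivity
  have h1 : (ri*A + 2*jq)/(P*A) < 1 := by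
    rw [div_lt_one (by positivity)]
    nlinarith
  rw [hx, Int.fract_intCast_add, Int.fract_eq_self.mpr ⟨h0, h1⟩]
  field_simp


set_option maxHeartbeats 1000000 in
/-- For even `n ≥ 2`, with the even-case weights, and every integer `j` with
`1 ≤ j < (sₙ - 1)/2`, the sum of the fractional parts `{j aᵢ / aₙ₊₁}` for
`i = 0, …, n` is at least `1 + 3j/aₙ₊₁`. -/
theorem even_case_fractional_parts_small_j (n : ℕ) (hn : 2 ≤ n) (he : Even n)
    (an an1 d : ℤ) (a : ℕ → ℤ)
    (han : 4 * an = (sylvester n : ℤ) ^ 2 + (sylvester n : ℤ) - 4)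
    (han1 : 2 * an1 = ((sylvester n : ℤ) - 1) * an - (sylvester n : ℤ) - 1)
    (hd : d = (-1 + an + an1) * ((sylvester n : ℤ) - 1))
    (ha : ∀ i < n, a i * (sylvester i : ℤ) = d)
    (hAn : a n = an) (hAn1 : a (n + 1) = an1) :
    ∀ j : ℤ, 1 ≤ j → 2 * j < (sylvester n : ℤ) - 1 →
      1 + 3 * (j : ℚ) / (an1 : ℚ) ≤
        ∑ i ∈ Finset.range (n + 1), Int.fract ((j : ℚ) * (a i : ℚ) / (an1 : ℚ)) := by
  intro j hj hjs
  set s : ℤ := (sylvester n : ℤ) with hsdef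
  have hs7 : (7:ℤ) ≤ s := by rw [hsdef]; exact_mod_cast sylvester_seven_le hn
  have h8A : 8 * an1 = s^3 - 9*s := by linear_combination 4*han1 + (s-1)*han
  have hApos : 0 < an1 := by
    nlinarith [mul_nonneg (show (0:ℤ) ≤ s-7 by linarith) (show (0:ℤ) ≤ s^2+7*s+40 by positivity)]
  have hcube : 4*((s-2)*(s+1)) < s^3 - 9*s := by
    nlinarith [mul_nonneg (show (0:ℤ) ≤ s-7 by linarith) (show (0:ℤ) ≤ s^2+3*s+16 by positivity)]
  have h1js : 2*j*(s+1) ≤ (s-2)*(s+1) := by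
    have h2 : 2*j ≤ s-2 := by omega
    have := mul_le_mul_of_nonneg_right h2 (show (0:ℤ) ≤ s+1 by linarith)
    linarith
  have hjA : j * (s+1) < an1 := by nlinarith
  have h2jA : 2*j < an1 := by
    have h3 : s+1 ≤ j*(s+1) := le_mul_of_one_le_left (by linarith) hj
    linarith
  have hd' : d = (s+1)*an1 + 2 := by
    have h2 : 2*d = 2*((s+1)*an1 + 2) := by linear_combination 2*hd - 2*han1
    linarith
  -- rational versions
  have hAq : (0:ℚ) < (an1:ℚ) := by exact_mod_cast hApos
  have hAne : (an1:ℚ) ≠ 0 := ne_of_gt hAq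
  have hjq : (1:ℚ) ≤ (j:ℚ) := by exact_mod_cast hj
  have hsq7 : (7:ℚ) ≤ (s:ℚ) := by exact_mod_cast hs7
  have hjsq : 2*(j:ℚ) ≤ (s:ℚ) - 2 := by
    have h2 : 2*j ≤ s - 2 := by omega
    exact_mod_cast h2
  have hjAq : (j:ℚ) * ((s:ℚ)+1) < (an1:ℚ) := by exact_mod_cast hjA
  have h2jAq : 2*(j:ℚ) < (an1:ℚ) := by exact_mod_cast h2jA
  have hs1ne : (s:ℚ) - 1 ≠ 0 := by intro h; nlinarith [h]
  -- quotient/remainder data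
  set q : ℕ → ℤ := fun i => (j*(s+1)) / (sylvester i : ℤ) with hqdef
  set r : ℕ → ℤ := fun i => (j*(s+1)) % (sylvester i : ℤ) with hrdef
  -- each term for i < n
  have key : ∀ i < n, Int.fract ((j : ℚ) * (a i : ℚ) / (an1 : ℚ))
      = (r i : ℚ) / (sylvester i : ℚ) + (2*(j:ℚ)/(an1:ℚ)) * (1/(sylvester i : ℚ)) := by
    intro i hi
    have hp2 : (2:ℤ) ≤ (sylvester i : ℤ) := by exact_mod_cast sylvester_two_le i
    have hp0 : (0:ℤ) < (sylvester i : ℤ) := by linarith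
    have hqr : (sylvester i : ℤ) * q i + r i = j*(s+1) := Int.mul_ediv_add_emod _ _
    have hr0 : 0 ≤ r i := Int.emod_nonneg _ (ne_of_gt hp0)
    have hrp' : r i < (sylvester i : ℤ) := Int.emod_lt_of_pos _ hp0
    have hrp : r i ≤ (sylvester i : ℤ) - 1 := by omega
    have had : a i * (sylvester i : ℤ) = (s+1)*an1 + 2 := by rw [ha i hi, hd']
    have hPq : (0:ℚ) < (sylvester i : ℚ) := by exact_mod_cast hp0
    apply frac_term_eq _ _ _ _ _ ((s:ℚ)) (q i) hPq hAq
    · exact_mod_cast had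
    · exact_mod_cast hqr
    · exact_mod_cast hr0
    · exact_mod_cast hrp
    · exact hjq
    · exact h2jAq
  -- the term for i = n
  have hann : an * (s - 1) = 2*an1 + s + 1 := by linarith
  have hannq : (an:ℚ) * ((s:ℚ) - 1) = 2*(an1:ℚ) + (s:ℚ) + 1 := by exact_mod_cast hann
  have hxn : (j:ℚ) * (a n : ℚ) / (an1:ℚ)
      = (2*(j:ℚ)*(an1:ℚ) + (j:ℚ)*((s:ℚ)+1))/(((s:ℚ)-1)*(an1:ℚ)) := by
    rw [hAn]
    field_simp
    linear_combination hannq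
  have hfn : Int.fract ((j : ℚ) * (a n : ℚ) / (an1 : ℚ))
      = (2*(j:ℚ)*(an1:ℚ) + (j:ℚ)*((s:ℚ)+1))/(((s:ℚ)-1)*(an1:ℚ)) := by
    rw [hxn]
    apply Int.fract_eq_self.mpr
    constructor
    · apply div_nonneg
      · nlinarith
      · nlinarith
    · rw [div_lt_one (by nlinarith)]
      nlinarith
  -- sum splitting
  rw [Finset.sum_range_succ, hfn]
  have hsylq : ((sylvester n : ℚ)) = (s:ℚ) := by rw [hsdef]; push_cast; ring
  have hsum : ∑ i ∈ Finset.range n, Int.fract ((j : ℚ) * (a i : ℚ) / (an1 : ℚ))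
      = (∑ i ∈ Finset.range n, (r i : ℚ) / (sylvester i : ℚ))
        + (2*(j:ℚ)/(an1:ℚ)) * (1 - 1/((s:ℚ)-1)) := by
    rw [Finset.sum_congr rfl (fun i hi => key i (Finset.mem_range.mp hi)),
      Finset.sum_add_distrib, ← Finset.mul_sum, sylvester_sum_inv n, hsylq]
  rw [hsum]
  -- the remainder sum R and quotient sum Q
  set R : ℚ := ∑ i ∈ Finset.range n, (r i : ℚ) / (sylvester i : ℚ) with hRdef
  set Q : ℤ := ∑ i ∈ Finset.range n, q i with hQdef
  have hR : R = (j:ℚ)*((s:ℚ)+1) * (1 - 1/((s:ℚ)-1)) - (Q:ℚ) := by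
    have hterm : ∀ i ∈ Finset.range n,
        (r i : ℚ) / (sylvester i : ℚ) = (j:ℚ)*((s:ℚ)+1) * (1/(sylvester i : ℚ)) - (q i : ℚ) := by
      intro i _
      have hp2 : (2:ℤ) ≤ (sylvester i : ℤ) := by exact_mod_cast sylvester_two_le i
      have hPq : (0:ℚ) < (sylvester i : ℚ) := by
        exact_mod_cast (show (0:ℤ) < (sylvester i : ℤ) by linarith)
      have hPne : (sylvester i : ℚ) ≠ 0 := ne_of_gt hPq
      have hqr : (sylvester i : ℤ) * q i + r i = j*(s+1) := Int.mul_ediv_add_emod _ _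
      have hqrq : (sylvester i : ℚ) * (q i : ℚ) + (r i : ℚ) = (j:ℚ)*((s:ℚ)+1) := by
        exact_mod_cast hqr
      field_simp
      linear_combination hqrq
    rw [hRdef, Finset.sum_congr rfl hterm, Finset.sum_sub_distrib, ← Finset.mul_sum,
      sylvester_sum_inv n, hsylq, hQdef]
    push_cast
    ring
  have hRnonneg : 0 ≤ R := by
    apply Finset.sum_nonneg
    intro i _
    have hp0 : (0:ℤ) < (sylvester i : ℤ) := by
      have := sylvester_two_le i
      exact_mod_cast (show 0 < sylvester i by omega)
    apply div_nonneg
    · exact_mod_cast Int.emod_nonneg _ (ne_of_gt hp0)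
    · exact_mod_cast le_of_lt hp0
  set N : ℤ := j*s - Q with hNdef
  have hNq : (N:ℚ) = R + 2*(j:ℚ)/((s:ℚ)-1) := by
    have : (N:ℚ) = (j:ℚ)*(s:ℚ) - (Q:ℚ) := by rw [hNdef]; push_cast; ring
    rw [this, hR]; field_simp; ring
  have hN1 : (1:ℚ) ≤ (N:ℚ) := by
    have hpos : (0:ℚ) < (N:ℚ) := by
      rw [hNq]
      have h4 : 0 < 2*(j:ℚ)/((s:ℚ)-1) :=
        div_pos (by linarith) (by linarith)
      linarith
    have : 0 < N := by exact_mod_cast hpos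
    have : 1 ≤ N := this
    exact_mod_cast this
  -- final algebra: total = N + 3j/an1
  have htot : R + (2*(j:ℚ)/(an1:ℚ)) * (1 - 1/((s:ℚ)-1))
      + (2*(j:ℚ)*(an1:ℚ) + (j:ℚ)*((s:ℚ)+1))/(((s:ℚ)-1)*(an1:ℚ))
      = (N:ℚ) + 3*(j:ℚ)/(an1:ℚ) := by
    rw [hNq]
    field_simp
    ring
  rw [htot]
  linarith
end

section
/- For every even integer n ≥ 2, with the even-case weights one has a_n·a_{n+1} > d; and for every odd integer n ≥ 3, with the odd-case weights one has a_n·a_{n+1} > d. (This is the arithmetic inequality showing the lower bound a_n·a_{n+1}/d for the alpha-invariant of the constructed hypersurface is greater than 1.) -/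
lemma sylvester_two_le_s18 : ∀ n, 2 ≤ sylvester n := by
  intro n
  induction n with
  | zero => simp [sylvester]
  | succ k ih =>
    show 2 ≤ sylvester k * (sylvester k - 1) + 1
    have : 1 ≤ sylvester k - 1 := by omega
    nlinarith

lemma sylvester_le_succ (n : ℕ) : sylvester n ≤ sylvester (n + 1) := by
  have h := sylvester_two_le_s18 n
  show sylvester n ≤ sylvester n * (sylvester n - 1) + 1
  have : 1 ≤ sylvester n - 1 := by omega
  calc sylvester n = sylvester n * 1 := by ring
    _ ≤ sylvester n * (sylvester n - 1) + 1 := by nlinarith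

lemma sylvester_mono : Monotone sylvester := monotone_nat_of_le_succ sylvester_le_succ

lemma seven_le (n : ℕ) (h : 2 ≤ n) : 7 ≤ sylvester n := by
  have := sylvester_mono h
  simpa [sylvester] using this

lemma fortythree_le (n : ℕ) (h : 3 ≤ n) : 43 ≤ sylvester n := by
  have := sylvester_mono h
  simpa [sylvester] using this

/-- The arithmetic inequality `aₙ · aₙ₊₁ > d`, showing the lower bound `aₙaₙ₊₁/d` for
the alpha-invariant of the constructed hypersurface is greater than `1`, in both the
even and odd cases. -/
theorem alpha_invariant_lower_bound_gt_one :
    (∀ n : ℕ, 2 ≤ n → Even n → ∀ an an1 d : ℤ,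
      4 * an = (sylvester n : ℤ) ^ 2 + (sylvester n : ℤ) - 4 →
      2 * an1 = ((sylvester n : ℤ) - 1) * an - (sylvester n : ℤ) - 1 →
      d = (-1 + an + an1) * ((sylvester n : ℤ) - 1) →
      d < an * an1) ∧
    (∀ n : ℕ, 3 ≤ n → Odd n → ∀ an an1 d : ℤ,
      4 * an = (sylvester n : ℤ) ^ 2 + 3 * (sylvester n : ℤ) - 6 →
      4 * an1 = ((sylvester n : ℤ) - 3) * an - (sylvester n : ℤ) - 1 →
      d = (-1 + an + an1) * ((sylvester n : ℤ) - 1) →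
      d < an * an1) := by
  constructor
  · intro n hn _ an an1 d h1 h2 h3
    have hs : (7 : ℤ) ≤ (sylvester n : ℤ) := by exact_mod_cast seven_le n hn
    set s := (sylvester n : ℤ)
    nlinarith [sq_nonneg s, sq_nonneg (s - 7), mul_pos (by nlinarith : (0:ℤ) < an) (by nlinarith : (0:ℤ) < an1)]
  · intro n hn _ an an1 d h1 h2 h3
    have hs : (43 : ℤ) ≤ (sylvester n : ℤ) := by exact_mod_cast fortythree_le n hn
    set s := (sylvester n : ℤ)
    nlinarith [sq_nonneg s, sq_nonneg (s - 43), mul_pos (by nlinarith : (0:ℤ) < an) (by nlinarith : (0:ℤ) < an1)]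
end
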